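/- Let (a,b) be a lexicographically nonincreasing digraphic list and (a',b) a digraphic list with a ≠ a' and a ≺ a'. Then N_2(a,b) > N_2(a',b). -/

import Mathlib

open Finset

/-- Partial sum of the first `k` entries of `a`. -/
def partSum {n : ℕ} (a : Fin n → ℕ) (k : ℕ) : ℕ :=
  ∑ i : Fin n, if (i : ℕ) < k then a i else 0

/-- `a ≺ a'` : `a` is majorized by `a'`. -/
def Majorized {n : ℕ} (a a' : Fin n → ℕ) : Prop :=
  (∀ k : ℕ, partSum a k ≤ partSum a' k) ∧ ∑ i, a i = ∑ i, a' i

/-- `a` is nonincreasing. -/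
def Nonincreasing {n : ℕ} (a : Fin n → ℕ) : Prop :=
  ∀ i j : Fin n, i ≤ j → a j ≤ a i

/-- `b` is nondecreasing. -/
def Nondecreasing {n : ℕ} (b : Fin n → ℕ) : Prop :=
  ∀ i j : Fin n, i ≤ j → b i ≤ b j

/-- `a` is obtained from `a'` by a unit `(i,j)`-transfer. -/
def UnitTransfer {n : ℕ} (a' a : Fin n → ℕ) (i j : Fin n) : Prop :=
  i < j ∧ a' j + 2 ≤ a' i ∧
  a = Function.update (Function.update a' i (a' i - 1)) j (a' j + 1)

/-- Row sum of a 0-1 matrix. -/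
def rowSum {n : ℕ} (M : Fin n → Fin n → Bool) (i : Fin n) : ℕ :=
  ∑ j, if M i j then 1 else 0

/-- Column sum of a 0-1 matrix. -/
def colSum {n : ℕ} (M : Fin n → Fin n → Bool) (j : Fin n) : ℕ :=
  ∑ i, if M i j then 1 else 0

/-- Number of loop-digraph realizations of `(a,b)`:
`n×n` 0-1 matrices with row sums `b` and column sums `a`. -/
noncomputable def N1 {n : ℕ} (a b : Fin n → ℕ) : ℕ :=
  Nat.card {M : Fin n → Fin n → Bool //
    (∀ i, rowSum M i = b i) ∧ (∀ j, colSum M j = a j)}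

def LoopDigraphic {n : ℕ} (a b : Fin n → ℕ) : Prop := 0 < N1 a b

/-- Number of digraph realizations of `(a,b)`:
`n×n` 0-1 matrices with zero diagonal, row sums `b` and column sums `a`. -/
noncomputable def N2 {n : ℕ} (a b : Fin n → ℕ) : ℕ :=
  Nat.card {M : Fin n → Fin n → Bool //
    (∀ i, M i i = false) ∧ (∀ i, rowSum M i = b i) ∧ (∀ j, colSum M j = a j)}

def Digraphic {n : ℕ} (a b : Fin n → ℕ) : Prop := 0 < N2 a b

/-- Number of simple graph realizations of `a` (symmetric 0-1 adjacency matrices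
with zero diagonal and degrees `a`). -/
noncomputable def N3 {n : ℕ} (a : Fin n → ℕ) : ℕ :=
  Nat.card {M : Fin n → Fin n → Bool //
    (∀ i j, M i j = M j i) ∧ (∀ i, M i i = false) ∧ (∀ i, rowSum M i = a i)}

def Graphic {n : ℕ} (a : Fin n → ℕ) : Prop := 0 < N3 a

/-- The minconvex list for parameters `n, m`. -/
def minconvex (n m : ℕ) : Fin n → ℕ :=
  fun i => if (i : ℕ) < m % n then m / n + 1 else m / n

/-- `(a,b)` is lexicographically nonincreasing. -/
def LexNonincreasing {n : ℕ} (a b : Fin n → ℕ) : Prop :=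
  ∀ i j : Fin n, i ≤ j → (a j < a i ∨ (a i = a j ∧ b j ≤ b i))

/-!
If `a ≺ a'`, `a ≠ a'` and `a` is nonincreasing, moving one unit of `a'` from the first index `i`
where it exceeds `a` to the first later index `j` where it falls short of `a` gives `a''` with
`a ≺ a''`, strictly closer to `a`. So it suffices that such a unit transfer `a' ↦ a''` never
decreases `N₂(·, b)`, and strictly increases it when `a'' = a`.

Fix all entries of a realization outside the columns `i, j`. A row other than `i, j` with exactly
one arc into `{i, j}` may send it to either column, and everything else is forced, so such a fibre
has `C(f, p)` elements, `p` being the number of these `f` rows sent to `i`. The transfer moves `p`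
one step towards `f / 2`, which cannot decrease `C(f, p)`, and increases it strictly on the fibre
of a realization `M` of `(a, b)` with `a j + M j i ≤ a i + M i j`. The lexicographic order
provides such an `M`: when `a i = a j` and `b j ≤ b i`, an arc `j → i` without `i → j` can be
reversed by a 3-cycle switch.
-/

open scoped Classical

section Sums
variable {α β : Type*} [Fintype α] [AddCommMonoid β]

theorem sum_add_sum_eq_of_eq_off (s : Finset α) {f g : α → β} (h : ∀ x ∉ s, f x = g x) :
    ∑ x, f x + ∑ x ∈ s, g x = ∑ x, g x + ∑ x ∈ s, f x := by
  rw [← sum_add_sum_compl s f, ← sum_add_sum_compl s g,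
    sum_congr rfl fun x hx => h x (mem_compl.mp hx)]
  abel

theorem sum_add_eq_of_eq_off_pair {i j : α} (hij : i ≠ j) {f g : α → β}
    (h : ∀ x, x ≠ i → x ≠ j → f x = g x) :
    ∑ x, f x + (g i + g j) = ∑ x, g x + (f i + f j) := by
  simpa only [sum_pair hij] using sum_add_sum_eq_of_eq_off {i, j} fun x hx => by
    simp only [mem_insert, mem_singleton, not_or] at hx
    exact h x hx.1 hx.2

end Sums

variable {n : ℕ}

structure IsRealization (a b : Fin n → ℕ) (M : Fin n → Fin n → Bool) : Prop where
  diag : ∀ r, M r r = false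
  row : ∀ r, rowSum M r = b r
  col : ∀ x, colSum M x = a x

noncomputable def realizations (a b : Fin n → ℕ) : Finset (Fin n → Fin n → Bool) :=
  univ.filter (IsRealization a b)

theorem N2_eq_card_realizations (a b : Fin n → ℕ) : N2 a b = #(realizations a b) := by
  rw [N2, Nat.card_eq_fintype_card, Fintype.card_subtype, realizations]
  congr 1
  ext M
  simp only [mem_filter, mem_univ, true_and]
  exact ⟨fun h => ⟨h.1, h.2.1, h.2.2⟩, fun h => ⟨h.diag, h.row, h.col⟩⟩

theorem sum_rowSum_eq_sum_colSum (M : Fin n → Fin n → Bool) :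
    ∑ r, rowSum M r = ∑ x, colSum M x :=
  sum_comm

theorem colSum_add_colSum_eq {M M' : Fin n → Fin n → Bool} {i j : Fin n} (hij : i ≠ j)
    (hrow : ∀ r, rowSum M' r = rowSum M r)
    (hcol : ∀ x, x ≠ i → x ≠ j → colSum M' x = colSum M x) :
    colSum M' i + colSum M' j = colSum M i + colSum M j := by
  have htotal : ∑ x, colSum M' x = ∑ x, colSum M x := by
    simp only [← sum_rowSum_eq_sum_colSum, hrow]
  have := sum_add_eq_of_eq_off_pair hij hcol
  omega

theorem colSum_add_card_filter_eq {M M' : Fin n → Fin n → Bool} {i : Fin n} (s : Finset (Fin n))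
    (h : ∀ r ∉ s, M' r i = M r i) :
    colSum M' i + #(s.filter (M · i)) = colSum M i + #(s.filter (M' · i)) := by
  simp only [colSum, card_filter]
  exact sum_add_sum_eq_of_eq_off s fun r hr => by rw [h r hr]

def clearCols (i j : Fin n) (M : Fin n → Fin n → Bool) : Fin n → Fin n → Bool :=
  fun r c => if c = i ∨ c = j then false else M r c

theorem apply_eq_of_clearCols_eq {i j : Fin n} {M M' : Fin n → Fin n → Bool}
    (h : clearCols i j M' = clearCols i j M) {r c : Fin n} (hi : c ≠ i) (hj : c ≠ j) :
    M' r c = M r c := by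
  simpa [clearCols, hi, hj] using congrFun (congrFun h r) c

theorem ite_add_ite_eq_of_clearCols_eq {i j : Fin n} (hij : i ≠ j)
    {M M' : Fin n → Fin n → Bool}
    (h : clearCols i j M' = clearCols i j M) {r : Fin n} (hrow : rowSum M' r = rowSum M r) :
    ((if M' r i then 1 else 0) + if M' r j then 1 else 0) =
      (if M r i then 1 else 0) + if M r j then 1 else 0 := by
  have := sum_add_eq_of_eq_off_pair hij (f := fun c => if M' r c then 1 else 0)
    (g := fun c => if M r c then 1 else 0)
    fun c hi hj => by rw [apply_eq_of_clearCols_eq h hi hj]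
  simp only [rowSum] at hrow
  omega

noncomputable def fiber (i j : Fin n) (a b : Fin n → ℕ) (g : Fin n → Fin n → Bool) :
    Finset (Fin n → Fin n → Bool) :=
  (realizations a b).filter (clearCols i j · = g)

theorem N2_eq_sum_card_fiber (i j : Fin n) (a b : Fin n → ℕ) :
    N2 a b = ∑ g, #(fiber i j a b g) := by
  rw [N2_eq_card_realizations]
  exact card_eq_sum_card_fiberwise fun _ _ => mem_univ _

section Reroute
variable {i j r c : Fin n} {a a' b : Fin n → ℕ} {M M' : Fin n → Fin n → Bool}
  {S : Finset (Fin n)}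

def splitRows (i j : Fin n) (M : Fin n → Fin n → Bool) : Finset (Fin n) :=
  univ.filter fun r => r ≠ i ∧ r ≠ j ∧ M r i ≠ M r j

theorem mem_splitRows : r ∈ splitRows i j M ↔ r ≠ i ∧ r ≠ j ∧ M r i ≠ M r j := by
  simp [splitRows]

def reroute (i j : Fin n) (M : Fin n → Fin n → Bool) (S : Finset (Fin n)) :
    Fin n → Fin n → Bool := fun r c =>
  if r ∈ splitRows i j M then
    if c = i then decide (r ∈ S) else if c = j then decide (r ∉ S) else M r c
  else M r c

theorem reroute_of_notMem (hr : r ∉ splitRows i j M) : reroute i j M S r c = M r c := by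
  simp [reroute, hr]

theorem reroute_of_ne (hi : c ≠ i) (hj : c ≠ j) : reroute i j M S r c = M r c := by
  simp [reroute, hi, hj]

theorem reroute_left (hr : r ∈ splitRows i j M) : reroute i j M S r i = decide (r ∈ S) := by
  simp [reroute, hr]

theorem reroute_right (hij : i ≠ j) (hr : r ∈ splitRows i j M) :
    reroute i j M S r j = decide (r ∉ S) := by
  simp [reroute, hr, hij.symm]

theorem clearCols_reroute : clearCols i j (reroute i j M S) = clearCols i j M := by
  funext r c
  by_cases hc : c = i ∨ c = j
  · simp [clearCols, hc]
  · rw [not_or] at hc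
    simp [clearCols, hc, reroute_of_ne hc.1 hc.2]

theorem filter_reroute_left (hS : S ⊆ splitRows i j M) :
    (splitRows i j M).filter (reroute i j M S · i) = S := by
  ext r
  simp only [mem_filter]
  constructor
  · rintro ⟨hr, h⟩
    simpa [reroute_left hr] using h
  · intro hr
    exact ⟨hS hr, by simp [reroute_left (hS hr), hr]⟩

theorem rowSum_reroute (hij : i ≠ j) : rowSum (reroute i j M S) r = rowSum M r := by
  by_cases hr : r ∈ splitRows i j M
  · have hpair := sum_add_eq_of_eq_off_pair hij
      (f := fun c => if reroute i j M S r c then 1 else 0) (g := fun c => if M r c then 1 else 0)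
      fun c hi hj => by rw [reroute_of_ne hi hj]
    have hsplit := (mem_splitRows.mp hr).2.2
    simp only [reroute_left hr, reroute_right hij hr] at hpair
    unfold rowSum
    by_cases hS : r ∈ S <;> cases h : M r i <;> simp_all
  · unfold rowSum
    simp only [reroute_of_notMem hr]

theorem IsRealization.apply_eq_of_notMem_splitRows (hij : i ≠ j) (hM : IsRealization a b M)
    (hM' : IsRealization a' b M') (hkey : clearCols i j M' = clearCols i j M)
    (hr : r ∉ splitRows i j M) : M' r = M r := by
  have hpair := ite_add_ite_eq_of_clearCols_eq hij hkey (r := r) (by rw [hM.row, hM'.row])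
  have hcols : M' r i = M r i ∧ M' r j = M r j := by
    rw [mem_splitRows, not_and, not_and, not_not] at hr
    by_cases hri : r = i
    · subst hri
      simp only [hM.diag, hM'.diag] at hpair ⊢
      revert hpair
      cases M r j <;> cases M' r j <;> simp
    by_cases hrj : r = j
    · subst hrj
      simp only [hM.diag, hM'.diag] at hpair ⊢
      revert hpair
      cases M r i <;> cases M' r i <;> simp
    rw [← hr hri hrj] at hpair ⊢
    revert hpair
    cases M r i <;> cases M' r i <;> cases M' r j <;> simp
  funext c
  by_cases hi : c = i
  · rw [hi, hcols.1]
  by_cases hj : c = j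
  · rw [hj, hcols.2]
  exact apply_eq_of_clearCols_eq hkey hi hj

theorem IsRealization.apply_right_eq_not (hij : i ≠ j) (hM : IsRealization a b M)
    (hM' : IsRealization a' b M') (hkey : clearCols i j M' = clearCols i j M)
    (hr : r ∈ splitRows i j M) : M' r j = !M' r i := by
  have hpair := ite_add_ite_eq_of_clearCols_eq hij hkey (r := r) (by rw [hM.row, hM'.row])
  have hsplit := (mem_splitRows.mp hr).2.2
  revert hpair hsplit
  cases M r i <;> cases M r j <;> cases M' r i <;> cases M' r j <;> simp

theorem mem_fiber {g : Fin n → Fin n → Bool} :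
    M' ∈ fiber i j a b g ↔ IsRealization a b M' ∧ clearCols i j M' = g := by
  simp [fiber, realizations]

theorem isRealization_reroute (hij : i ≠ j) (hM : IsRealization a b M)
    (hout : ∀ x, x ≠ i → x ≠ j → a' x = a x) (hsum : a' i + a' j = a i + a j)
    (hS : S ⊆ splitRows i j M) (hp : a' i + #((splitRows i j M).filter (M · i)) = a i + #S) :
    IsRealization a' b (reroute i j M S) := by
  have hrow : ∀ r, rowSum (reroute i j M S) r = rowSum M r := fun r => rowSum_reroute hij
  have hcol_out : ∀ x, x ≠ i → x ≠ j → colSum (reroute i j M S) x = colSum M x :=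
    fun x hi hj => by simp only [colSum, reroute_of_ne hi hj]
  have hcol_i : colSum (reroute i j M S) i = a' i := by
    have := colSum_add_card_filter_eq (M' := reroute i j M S) (i := i) (splitRows i j M)
      fun r hr => reroute_of_notMem hr
    rw [filter_reroute_left hS, hM.col] at this
    omega
  have hcol_j := colSum_add_colSum_eq hij hrow hcol_out
  rw [hM.col, hM.col, hcol_i] at hcol_j
  refine ⟨fun r => ?_, fun r => (hrow r).trans (hM.row r), fun x => ?_⟩
  · by_cases hr : r ∈ splitRows i j M
    · obtain ⟨hri, hrj, -⟩ := mem_splitRows.mp hr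
      rw [reroute_of_ne hri hrj, hM.diag]
    · rw [reroute_of_notMem hr, hM.diag]
  · by_cases hi : x = i
    · rw [hi, hcol_i]
    by_cases hj : x = j
    · rw [hj]
      omega
    rw [hcol_out x hi hj, hM.col, hout x hi hj]

theorem IsRealization.reroute_filter_eq (hij : i ≠ j) (hM : IsRealization a b M)
    (hM' : IsRealization a' b M') (hkey : clearCols i j M' = clearCols i j M) :
    reroute i j M ((splitRows i j M).filter (M' · i)) = M' := by
  funext r c
  by_cases hr : r ∈ splitRows i j M
  · by_cases hi : c = i
    · subst hi
      simp [reroute_left hr, hr]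
    by_cases hj : c = j
    · subst hj
      simp [reroute_right hij hr, hr, hM.apply_right_eq_not hij hM' hkey hr]
    rw [reroute_of_ne hi hj, apply_eq_of_clearCols_eq hkey hi hj]
  · rw [reroute_of_notMem hr, hM.apply_eq_of_notMem_splitRows hij hM' hkey hr]

theorem card_fiber (hij : i ≠ j) (hM : IsRealization a b M)
    (hout : ∀ x, x ≠ i → x ≠ j → a' x = a x) (hsum : a' i + a' j = a i + a j) {p : ℕ}
    (hp : a' i + #((splitRows i j M).filter (M · i)) = a i + p) :
    #(fiber i j a' b (clearCols i j M)) = (#(splitRows i j M)).choose p := by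
  rw [← card_powersetCard]
  refine card_nbij' (fun M' => (splitRows i j M).filter (M' · i)) (reroute i j M) ?_ ?_ ?_ ?_
  · intro M' hM'
    obtain ⟨hM', hkey⟩ := mem_fiber.mp hM'
    refine mem_powersetCard.mpr ⟨filter_subset _ _, ?_⟩
    have := colSum_add_card_filter_eq (M := M) (M' := M') (i := i) (splitRows i j M)
      fun r hr => by rw [hM.apply_eq_of_notMem_splitRows hij hM' hkey hr]
    rw [hM'.col, hM.col] at this
    beta_reduce
    omega
  · intro S hS
    obtain ⟨hSF, rfl⟩ := mem_powersetCard.mp hS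
    exact mem_fiber.mpr ⟨isRealization_reroute hij hM hout hsum hSF hp, clearCols_reroute⟩
  · intro M' hM'
    obtain ⟨hM', hkey⟩ := mem_fiber.mp hM'
    exact hM.reroute_filter_eq hij hM' hkey
  · intro S hS
    exact filter_reroute_left (mem_powersetCard.mp hS).1

theorem card_filter_left_add_card_filter_right :
    #((splitRows i j M).filter (M · i)) + #((splitRows i j M).filter (M · j)) =
      #(splitRows i j M) := by
  rw [← card_filter_add_card_filter_not (s := splitRows i j M) (M · i)]
  congr 2
  refine filter_congr fun r hr => ?_
  have := (mem_splitRows.mp hr).2.2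
  revert this
  cases M r i <;> cases M r j <;> simp

/-- Columns `i` and `j` of `M` agree outside the split rows and the rows `i, j`. -/
theorem IsRealization.colSum_balance (hij : i ≠ j) (hM : IsRealization a b M) :
    a i + (if M i j then 1 else 0) + #((splitRows i j M).filter (M · j)) =
      a j + (if M j i then 1 else 0) + #((splitRows i j M).filter (M · i)) := by
  have hiF : i ∉ splitRows i j M := fun h => (mem_splitRows.mp h).1 rfl
  have hjF : j ∉ splitRows i j M := fun h => (mem_splitRows.mp h).2.1 rfl
  have hiS : i ∉ insert j (splitRows i j M) := by simp [hij, hiF]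
  have := sum_add_sum_eq_of_eq_off (insert i (insert j (splitRows i j M)))
    (f := fun r => if M r i then 1 else 0) (g := fun r => if M r j then 1 else 0) fun r hr => by
      simp only [mem_insert, not_or, mem_splitRows, not_and, not_not] at hr
      rw [hr.2.2 hr.1 hr.2.1]
  rw [sum_insert hiS, sum_insert hjF, sum_insert hiS, sum_insert hjF] at this
  simp only [hM.diag, Bool.false_eq_true, if_false] at this
  rw [← hM.col i, ← hM.col j, card_filter, card_filter]
  unfold colSum
  omega

end Reroute

theorem Nat.choose_succ_le_choose {f p : ℕ} (h : f ≤ 2 * p + 1) :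
    f.choose (p + 1) ≤ f.choose p := by
  refine Nat.le_of_mul_le_mul_right ?_ p.succ_pos
  rw [Nat.choose_succ_right_eq]
  exact Nat.mul_le_mul_left _ (by omega)

theorem Nat.choose_succ_lt_choose {f p : ℕ} (hp : p ≤ f) (h : f ≤ 2 * p) :
    f.choose (p + 1) < f.choose p := by
  refine Nat.lt_of_mul_lt_mul_right (a := p + 1) ?_
  rw [Nat.choose_succ_right_eq]
  exact Nat.mul_lt_mul_of_pos_left (by omega) (Nat.choose_pos hp)

section Transfer
variable {i j : Fin n} {a a' b : Fin n → ℕ} {M : Fin n → Fin n → Bool}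

theorem UnitTransfer.apply_left (h : UnitTransfer a' a i j) : a i + 1 = a' i := by
  obtain ⟨hij, h2, rfl⟩ := h
  rw [Function.update_of_ne hij.ne, Function.update_self]
  omega

theorem UnitTransfer.apply_right (h : UnitTransfer a' a i j) : a j = a' j + 1 := by
  obtain ⟨-, -, rfl⟩ := h
  exact Function.update_self ..

theorem UnitTransfer.apply_of_ne (h : UnitTransfer a' a i j) {x : Fin n} (hi : x ≠ i)
    (hj : x ≠ j) : a x = a' x := by
  obtain ⟨-, -, rfl⟩ := h
  rw [Function.update_of_ne hj, Function.update_of_ne hi]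

theorem card_fiber_le_of_unitTransfer (h : UnitTransfer a' a i j) (g : Fin n → Fin n → Bool) :
    #(fiber i j a' b g) ≤ #(fiber i j a b g) := by
  have hij := h.1.ne
  obtain hempty | ⟨M, hM⟩ := (fiber i j a' b g).eq_empty_or_nonempty
  · simp [hempty]
  simp only [fiber, realizations, mem_filter, mem_univ, true_and] at hM
  obtain ⟨hM, rfl⟩ := hM
  have hcols := hM.colSum_balance hij
  have hsplit := card_filter_left_add_card_filter_right (i := i) (j := j) (M := M)
  have hji : (if M j i then 1 else 0) ≤ 1 := ite_le_one le_rfl zero_le_one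
  have hgap := h.2.1
  obtain ⟨p, hp⟩ : ∃ p, #((splitRows i j M).filter (M · i)) = p + 1 :=
    ⟨_, (Nat.succ_pred_eq_of_pos (by omega)).symm⟩
  have hleft := h.apply_left
  rw [card_fiber hij hM (fun _ _ _ => rfl) rfl rfl,
    card_fiber hij hM (fun x hi hj => h.apply_of_ne hi hj)
      (by have := h.apply_right; omega) (p := p) (by omega), hp]
  exact Nat.choose_succ_le_choose (by omega)

theorem card_fiber_lt_of_unitTransfer (h : UnitTransfer a' a i j) (hM : IsRealization a b M)
    (hbal : a j + (if M j i then 1 else 0) ≤ a i + (if M i j then 1 else 0)) :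
    #(fiber i j a' b (clearCols i j M)) < #(fiber i j a b (clearCols i j M)) := by
  have hij := h.1.ne
  have hcols := hM.colSum_balance hij
  have hsplit := card_filter_left_add_card_filter_right (i := i) (j := j) (M := M)
  have hleft := h.apply_left
  have hle := card_filter_le (splitRows i j M) (M · i)
  rw [card_fiber hij hM (fun _ _ _ => rfl) rfl rfl,
    card_fiber hij hM (fun x hi hj => (h.apply_of_ne hi hj).symm)
      (by have := h.apply_right; omega) (p := #((splitRows i j M).filter (M · i)) + 1)
      (by omega)]
  exact Nat.choose_succ_lt_choose hle (by omega)

theorem N2_le_of_unitTransfer (h : UnitTransfer a' a i j) : N2 a' b ≤ N2 a b := by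
  rw [N2_eq_sum_card_fiber i j, N2_eq_sum_card_fiber i j]
  exact sum_le_sum fun g _ => card_fiber_le_of_unitTransfer h g

theorem N2_lt_of_unitTransfer (h : UnitTransfer a' a i j) (hM : IsRealization a b M)
    (hbal : a j + (if M j i then 1 else 0) ≤ a i + (if M i j then 1 else 0)) :
    N2 a' b < N2 a b := by
  rw [N2_eq_sum_card_fiber i j, N2_eq_sum_card_fiber i j]
  exact sum_lt_sum (fun g _ => card_fiber_le_of_unitTransfer h g)
    ⟨clearCols i j M, mem_univ _, card_fiber_lt_of_unitTransfer h hM hbal⟩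

end Transfer

theorem exists_mem_notMem_of_card_le {α : Type*} {s t : Finset α} (h : #t ≤ #s) {x : α}
    (hxt : x ∈ t) (hxs : x ∉ s) : ∃ y ∈ s, y ∉ t := by
  by_contra! hst
  have := card_lt_card ((ssubset_iff_of_subset hst).mpr ⟨x, hxt, hxs⟩)
  omega

section Switch
variable {i j : Fin n} {a b : Fin n → ℕ} {M : Fin n → Fin n → Bool}

theorem exists_apply_and_not_of_rowSum_le {M : Fin n → Fin n → Bool} {i j : Fin n}
    (h : rowSum M j ≤ rowSum M i) (hji : M j i = true) (hii : M i i = false) :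
    ∃ c, M i c = true ∧ M j c = false := by
  obtain ⟨c, hc, hc'⟩ := exists_mem_notMem_of_card_le (s := univ.filter (M i ·))
    (t := univ.filter (M j ·)) (by simpa only [rowSum, card_filter] using h)
    (x := i) (by simp [hji]) (by simp [hii])
  simp only [mem_filter, mem_univ, true_and, Bool.not_eq_true] at hc hc'
  exact ⟨c, hc, hc'⟩

theorem exists_apply_and_not_of_colSum_le {M : Fin n → Fin n → Bool} {i j : Fin n}
    (h : colSum M i ≤ colSum M j) (hji : M j i = true) (hjj : M j j = false) :
    ∃ r, M r j = true ∧ M r i = false := by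
  obtain ⟨r, hr, hr'⟩ := exists_mem_notMem_of_card_le (s := univ.filter (M · j))
    (t := univ.filter (M · i)) (by simpa only [colSum, card_filter] using h)
    (x := j) (by simp [hji]) (by simp [hjj])
  simp only [mem_filter, mem_univ, true_and, Bool.not_eq_true] at hr hr'
  exact ⟨r, hr, hr'⟩

/-- Reversing the arc `j → i`: a 3-cycle switch through a column `c` with `i → c`, `j ↛ c`
and a row `r` with `r → j`, `r ↛ i`. -/
theorem IsRealization.exists_reverse (hM : IsRealization a b M) (hji : M j i = true)
    (hij : M i j = false) (hb : b j ≤ b i) (ha : a i ≤ a j) :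
    ∃ M', IsRealization a b M' ∧ M' i j = true ∧ M' j i = false := by
  obtain ⟨c, hic, hjc⟩ := exists_apply_and_not_of_rowSum_le
    (by rwa [hM.row, hM.row]) hji (hM.diag i)
  obtain ⟨r, hrj, hri⟩ := exists_apply_and_not_of_colSum_le
    (by rwa [hM.col, hM.col]) hji (hM.diag j)
  have hne : i ≠ j := by rintro rfl; simp [hji] at hij
  have hci : c ≠ i := by rintro rfl; simp [hM.diag] at hic
  have hcj : c ≠ j := by rintro rfl; simp [hij] at hic
  have hri' : r ≠ i := by rintro rfl; simp [hij] at hrj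
  have hrj' : r ≠ j := by rintro rfl; simp [hM.diag] at hrj
  -- Each row and each column of the switched matrix is a permutation of that of `M`.
  let τ : Fin n → Equiv.Perm (Fin n) := fun x =>
    if x = i then Equiv.swap j c else if x = j then Equiv.swap c i
    else if x = r then Equiv.swap i j else 1
  let σ : Fin n → Equiv.Perm (Fin n) := fun y =>
    if y = i then Equiv.swap j r else if y = j then Equiv.swap i r
    else if y = c then Equiv.swap i j else 1
  have hcol : ∀ x y, M x (τ x y) = M (σ y x) y := by
    intro x y
    simp only [τ, σ]
    split_ifs <;> subst_vars <;>
      simp [Equiv.swap_apply_def, hM.diag, hne.symm, hci.symm, hcj.symm, hri'.symm, hrj'.symm,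
        *]
  refine ⟨fun x y => M x (τ x y), ⟨fun x => ?_, fun x => ?_, fun y => ?_⟩, ?_, ?_⟩
  · simp only [τ]
    split_ifs <;> subst_vars <;>
      simp [Equiv.swap_apply_def, hM.diag, hne.symm, hci.symm, hcj.symm, *]
  · rw [← hM.row x]
    exact Equiv.sum_comp (τ x) (fun y => if M x y then 1 else 0)
  · rw [← hM.col y]
    simp only [colSum, hcol]
    exact Equiv.sum_comp (σ y) (fun x => if M x y then 1 else 0)
  · simp [τ, hic]
  · simp [τ, hne.symm, hjc]

theorem IsRealization.exists_balanced (hM : IsRealization a b M)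
    (hlex : a j < a i ∨ (a i = a j ∧ b j ≤ b i)) :
    ∃ M', IsRealization a b M' ∧
      a j + (if M' j i then 1 else 0) ≤ a i + if M' i j then 1 else 0 := by
  rcases hlex with hlt | ⟨heq, hb⟩
  · exact ⟨M, hM, by split_ifs <;> omega⟩
  cases hji : M j i
  · exact ⟨M, hM, by simp [hji, heq]⟩
  cases hij : M i j
  · obtain ⟨M', hM', hij', hji'⟩ := hM.exists_reverse hji hij hb heq.le
    exact ⟨M', hM', by simp [hij', hji', heq]⟩
  · exact ⟨M, hM, by simp [hji, hij, heq]⟩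

end Switch

section PartSum
variable {i j : Fin n} {a a' : Fin n → ℕ} {k : ℕ}

theorem partSum_le_partSum (h : ∀ t : Fin n, (t : ℕ) < k → a t ≤ a' t) :
    partSum a k ≤ partSum a' k :=
  sum_le_sum fun t _ => by split_ifs with ht; exacts [h t ht, le_rfl]

theorem partSum_lt_partSum (h : ∀ t : Fin n, (t : ℕ) < k → a t ≤ a' t) {t₀ : Fin n}
    (ht₀ : (t₀ : ℕ) < k) (hlt : a t₀ < a' t₀) : partSum a k < partSum a' k :=
  sum_lt_sum (fun t _ => by split_ifs with ht; exacts [h t ht, le_rfl])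
    ⟨t₀, mem_univ _, by simpa [ht₀] using hlt⟩

theorem partSum_eq_sum (c : Fin n → ℕ) : partSum c n = ∑ t, c t :=
  sum_congr rfl fun t _ => if_pos t.isLt

def sumPartSums (a : Fin n → ℕ) : ℕ :=
  ∑ k ∈ range n, partSum a k

theorem UnitTransfer.partSum_eq (h : UnitTransfer a' a i j) (hk : (j : ℕ) < k) :
    partSum a k = partSum a' k := by
  have hij : (i : ℕ) < j := h.1
  have hpair := sum_add_eq_of_eq_off_pair h.1.ne (f := fun t => if (t : ℕ) < k then a t else 0)
    (g := fun t => if (t : ℕ) < k then a' t else 0) fun x hi hj => by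
      simp only [h.apply_of_ne hi hj]
  have := h.apply_left
  have := h.apply_right
  simp only [if_pos hk, if_pos (hij.trans hk)] at hpair
  unfold partSum
  omega

theorem UnitTransfer.sum_eq (h : UnitTransfer a' a i j) : ∑ t, a t = ∑ t, a' t := by
  rw [← partSum_eq_sum, ← partSum_eq_sum, h.partSum_eq j.isLt]

theorem UnitTransfer.le_of_ne (h : UnitTransfer a' a i j) {x : Fin n} (hx : x ≠ j) :
    a x ≤ a' x := by
  by_cases hi : x = i
  · have := h.apply_left
    subst hi
    omega
  · exact (h.apply_of_ne hi hx).le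

theorem UnitTransfer.sumPartSums_lt (h : UnitTransfer a' a i j) :
    sumPartSums a < sumPartSums a' := by
  have hle : ∀ k, (k : ℕ) ≤ j → ∀ t : Fin n, (t : ℕ) < k → a t ≤ a' t :=
    fun k hk t ht => h.le_of_ne (Fin.ne_of_lt (by omega))
  refine sum_lt_sum (fun k _ => ?_) ⟨j, mem_range.mpr j.isLt, ?_⟩
  · by_cases hk : (j : ℕ) < k
    · exact (h.partSum_eq hk).le
    · exact partSum_le_partSum (hle k (by omega))
  · exact partSum_lt_partSum (hle j le_rfl) h.1 (by have := h.apply_left; omega)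

theorem Majorized.exists_unitTransfer (ha : Nonincreasing a) (hmaj : Majorized a a')
    (hne : a ≠ a') : ∃ i j a'', UnitTransfer a' a'' i j ∧ Majorized a a'' := by
  obtain ⟨hps, htot⟩ := hmaj
  obtain ⟨i, hi, hi_min⟩ := (univ.filter fun t => a t ≠ a' t).exists_min_image id
    (by simpa [filter_nonempty_iff, funext_iff] using hne)
  simp only [mem_filter, mem_univ, true_and, id] at hi hi_min
  have hpre : ∀ t, t < i → a t = a' t := fun t ht => by
    by_contra h
    exact (hi_min t h).not_gt ht
  have hai : a i < a' i := by
    refine lt_of_le_of_ne (not_lt.mp fun hlt => (hps (i + 1)).not_gt ?_) hi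
    refine partSum_lt_partSum (fun t ht => ?_) (Nat.lt_succ_self _) hlt
    rcases (Nat.lt_succ_iff.mp ht).lt_or_eq with ht | ht
    · exact (hpre t ht).ge
    · exact (Fin.ext ht ▸ hlt).le
  obtain ⟨j, hj, hj_min⟩ := (univ.filter fun t => i < t ∧ a' t < a t).exists_min_image id (by
    by_contra! hempty
    simp only [filter_eq_empty_iff, mem_univ, true_implies, not_and, not_lt] at hempty
    refine htot.not_lt (sum_lt_sum (fun t _ => ?_) ⟨i, mem_univ _, hai⟩)
    rcases lt_trichotomy t i with ht | rfl | ht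
    exacts [(hpre t ht).le, hai.le, hempty ht])
  simp only [mem_filter, mem_univ, true_and, id] at hj hj_min
  have hmid : ∀ t, i < t → t < j → a t ≤ a' t := fun t hit htj =>
    not_lt.mp fun h => (hj_min t ⟨hit, h⟩).not_gt htj
  have hT : UnitTransfer a' _ i j := ⟨hj.1, by have := ha i j hj.1.le; omega, rfl⟩
  refine ⟨i, j, _, hT, fun k => ?_, htot.trans hT.sum_eq.symm⟩
  by_cases hk : (j : ℕ) < k
  · exact (hps k).trans (hT.partSum_eq hk).ge
  refine partSum_le_partSum fun t ht => ?_
  have htj : t < j := Fin.lt_def.mpr (by omega)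
  rcases lt_trichotomy t i with hti | rfl | hti
  · rw [hT.apply_of_ne hti.ne htj.ne, hpre t hti]
  · have := hT.apply_left
    omega
  · rw [hT.apply_of_ne hti.ne' htj.ne]
    exact hmid t hti htj

end PartSum

theorem LexNonincreasing.nonincreasing {a b : Fin n → ℕ} (h : LexNonincreasing a b) :
    Nonincreasing a :=
  fun i j hij => (h i j hij).elim le_of_lt fun h => h.1.ge

theorem Digraphic.exists_isRealization {a b : Fin n → ℕ} (h : Digraphic a b) :
    ∃ M, IsRealization a b M := by
  rw [Digraphic, N2_eq_card_realizations, card_pos] at h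
  obtain ⟨M, hM⟩ := h
  exact ⟨M, (mem_filter.mp hM).2⟩

theorem stmt16_general {n : ℕ} (a a' b : Fin n → ℕ)
    (hlex : LexNonincreasing a b) (hd : Digraphic a b)
    (hne : a ≠ a') (hmaj : Majorized a a') :
    N2 a' b < N2 a b := by
  obtain ⟨M, hM⟩ := hd.exists_isRealization
  induction hμ : sumPartSums a' using Nat.strong_induction_on generalizing a' with
  | _ μ ih =>
    obtain ⟨i, j, a'', hT, hmaj''⟩ := hmaj.exists_unitTransfer hlex.nonincreasing hne
    by_cases h : a'' = a
    · subst h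
      obtain ⟨M', hM', hbal⟩ := hM.exists_balanced (hlex i j hT.1.le)
      exact N2_lt_of_unitTransfer hT hM' hbal
    calc N2 a' b ≤ N2 a'' b := N2_le_of_unitTransfer hT
      _ < N2 a b := ih _ (hμ ▸ hT.sumPartSums_lt) a'' (Ne.symm h) hmaj'' rfl

theorem stmt16 {n : ℕ} (a a' b : Fin n → ℕ)
    (hlex : LexNonincreasing a b) (hd : Digraphic a b) (hd' : Digraphic a' b)
    (hne : a ≠ a') (hmaj : Majorized a a') :
    N2 a' b < N2 a b :=
  stmt16_general a a' b hlex hd hne hmaj
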